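/- arXiv:1209.2010 — 3 statements merged into one kernel-verified Lean document; each statement's English description precedes it below -/
import Mathlib

section
/- Let X be a complete metric space and R ⊆ C([0,∞); X) satisfy (K1)–(K4), where (K3) is the concatenation property and (K4) is: for any sequence φⁿ ∈ R with φⁿ(0) → φ₀ in X, there exist a subsequence φⁿᵏ and φ ∈ R with φⁿᵏ(t) → φ(t) for every t ≥ 0. If z ∈ X satisfies z ∈ G(t,z) for all t ≥ 0, then z is a fixed point of R, i.e., the constant function φ(t) ≡ z belongs to R. -/
/-!
Gluing `n 2ⁿ` copies of a trajectory that returns to `z` at time `2⁻ⁿ` gives a trajectory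
equal to `z` on the dyadic grid of mesh `2⁻ⁿ` in `[0, n]`. By (K4) a subsequence of these
converges pointwise to some `ψ ∈ R`, which then equals `z` at every dyadic rational, hence
everywhere by continuity.
-/

open Set Filter Topology
open scoped NNReal

section

variable {X : Type*}

/-- The concatenation property (K3) of a set of trajectories. -/
def ConcatClosed [TopologicalSpace X] (R : Set C(ℝ≥0, X)) : Prop :=
  ∀ φ₁ ∈ R, ∀ φ₂ ∈ R, ∀ s : ℝ≥0, 0 < s → φ₂ 0 = φ₁ s →
    ∃ φ ∈ R, (∀ t : ℝ≥0, t ≤ s → φ t = φ₁ t) ∧ (∀ t : ℝ≥0, φ (s + t) = φ₂ t)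

theorem ConcatClosed.exists_eq_at_nat_mul [TopologicalSpace X] {R : Set C(ℝ≥0, X)}
    (hR : ConcatClosed R) {z : X} {s : ℝ≥0} (hs : 0 < s) {φ : C(ℝ≥0, X)} (hφR : φ ∈ R)
    (hφ0 : φ 0 = z) (hφs : φ s = z) (m : ℕ) :
    ∃ ψ ∈ R, ∀ k ≤ m, ψ (k * s) = z := by
  -- (K3) only glues at positive times, so the induction starts from the grid `{0, s}`.
  suffices h : ∀ m : ℕ, ∃ ψ ∈ R, ∀ k ≤ m + 1, ψ (k * s) = z from
    (h m).imp fun ψ ⟨hψR, hψ⟩ => ⟨hψR, fun k hk => hψ k (by omega)⟩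
  intro m
  induction m with
  | zero =>
    refine ⟨φ, hφR, fun k hk => ?_⟩
    interval_cases k <;> simpa
  | succ m ih =>
    obtain ⟨ψ₁, hψ₁R, hψ₁⟩ := ih
    have hglue : φ 0 = ψ₁ ((m + 1 : ℕ) * s) := by rw [hφ0, hψ₁ _ le_rfl]
    obtain ⟨ψ, hψR, hψ_le, hψ_shift⟩ :=
      hR ψ₁ hψ₁R φ hφR _ (mul_pos (by positivity) hs) hglue
    refine ⟨ψ, hψR, fun k hk => ?_⟩
    rcases Nat.lt_or_ge k (m + 2) with hk' | hk'
    · rw [hψ_le _ (by gcongr; omega), hψ₁ k (by omega)]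
    · obtain rfl : k = m + 1 + 1 := by omega
      have hsplit : ((m + 1 + 1 : ℕ) : ℝ≥0) * s = (m + 1 : ℕ) * s + s := by push_cast; ring
      rw [hsplit, hψ_shift, hφs]

theorem NNReal.natCast_mul_two_pow_sub_div_two_pow {i n : ℕ} (hi : i ≤ n) (j : ℕ) :
    ((j * 2 ^ (n - i) : ℕ) : ℝ≥0) / 2 ^ n = j / 2 ^ i := by
  rw [div_eq_div_iff (by positivity) (by positivity), Nat.cast_mul, Nat.cast_pow, mul_assoc,
    Nat.cast_ofNat, ← pow_add, Nat.sub_add_cancel hi]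

theorem NNReal.tendsto_floor_mul_two_pow_div_two_pow (t : ℝ≥0) :
    Tendsto (fun i : ℕ => (⌊t * 2 ^ i⌋₊ : ℝ≥0) / 2 ^ i) atTop (𝓝 t) := by
  have hlower : Tendsto (fun i : ℕ => t - 2⁻¹ ^ i) atTop (𝓝 t) := by
    simpa using tendsto_const_nhds.sub
      (NNReal.tendsto_pow_atTop_nhds_zero_of_lt_one (r := 2⁻¹) (by norm_num))
  refine tendsto_of_tendsto_of_tendsto_of_le_of_le hlower tendsto_const_nhds (fun i => ?_)
    (fun i => ?_)
  · rw [tsub_le_iff_right, inv_pow, ← one_div, ← add_div,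
      le_div_iff₀ (by positivity)]
    exact (Nat.lt_floor_add_one _).le
  · rw [div_le_iff₀ (by positivity)]
    exact Nat.floor_le (by positivity)

theorem ContinuousMap.eq_of_forall_dyadic_eq [TopologicalSpace X] [T1Space X]
    (f : C(ℝ≥0, X)) {z : X} (hf : ∀ i j : ℕ, f (j / 2 ^ i) = z) (t : ℝ≥0) : f t = z :=
  (isClosed_singleton.preimage f.continuous).mem_of_tendsto
    (NNReal.tendsto_floor_mul_two_pow_div_two_pow t) (Eventually.of_forall fun i => hf i _)

theorem apply_dyadic_eq_of_tendsto [TopologicalSpace X] [T1Space X] {φ : ℕ → C(ℝ≥0, X)}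
    {z : X} (hφ : ∀ n k : ℕ, k ≤ n * 2 ^ n → φ n ((k : ℝ≥0) / 2 ^ n) = z)
    {σ : ℕ → ℕ} (hσ : StrictMono σ)
    {ψ : C(ℝ≥0, X)} (hψ : ∀ t, Tendsto (fun k => φ (σ k) t) atTop (𝓝 (ψ t))) (i j : ℕ) :
    ψ (j / 2 ^ i) = z := by
  refine isClosed_singleton.mem_of_tendsto (hψ _) ?_
  filter_upwards [eventually_ge_atTop (max i j)] with k hk
  have hn : max i j ≤ σ k := hk.trans hσ.le_apply
  rw [mem_singleton_iff, ← NNReal.natCast_mul_two_pow_sub_div_two_pow (le_of_max_le_left hn)]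
  refine hφ _ _ (Nat.mul_le_mul (le_of_max_le_right hn) ?_)
  exact Nat.pow_le_pow_right two_pos (Nat.sub_le _ _)

end

theorem fixed_point_of_rest_point_general
    {X : Type*} [MetricSpace X]
    (R : Set C(ℝ≥0, X))
    (hK3 : ∀ φ₁ ∈ R, ∀ φ₂ ∈ R, ∀ s : ℝ≥0, 0 < s → φ₂ 0 = φ₁ s →
      ∃ φ ∈ R, (∀ t : ℝ≥0, t ≤ s → φ t = φ₁ t) ∧ (∀ t : ℝ≥0, φ (s + t) = φ₂ t))
    (hK4 : ∀ φ : ℕ → C(ℝ≥0, X), (∀ n, φ n ∈ R) →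
      ∀ x₀ : X, Tendsto (fun n => φ n 0) atTop (𝓝 x₀) →
      ∃ σ : ℕ → ℕ, StrictMono σ ∧ ∃ ψ ∈ R,
        ∀ t : ℝ≥0, Tendsto (fun k => φ (σ k) t) atTop (𝓝 (ψ t)))
    (G : ℝ≥0 → X → Set X)
    (hG : ∀ t x, G t x = {y | ∃ φ ∈ R, φ 0 = x ∧ φ t = y})
    (z : X)
    (hz : ∀ t : ℝ≥0, z ∈ G t z) :
    ∃ φ ∈ R, ∀ t : ℝ≥0, φ t = z := by
  have hgrid : ∀ n : ℕ, ∃ φ ∈ R, ∀ k : ℕ, k ≤ n * 2 ^ n → φ ((k : ℝ≥0) / 2 ^ n) = z := by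
    intro n
    obtain ⟨φ, hφR, hφ0, hφs⟩ : ∃ φ ∈ R, φ 0 = z ∧ φ (2 ^ n)⁻¹ = z := by
      simpa only [hG, mem_ofPred_eq] using hz (2 ^ n)⁻¹
    simpa only [div_eq_mul_inv] using
      ConcatClosed.exists_eq_at_nat_mul hK3 (by positivity) hφR hφ0 hφs (n * 2 ^ n)
  choose φ hφR hφ using hgrid
  have hφ0 : ∀ n, φ n 0 = z := fun n => by simpa using hφ n 0 (Nat.zero_le _)
  obtain ⟨σ, hσ, ψ, hψR, hψ⟩ := hK4 φ hφR z (by simp only [hφ0]; exact tendsto_const_nhds)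
  exact ⟨ψ, hψR, ψ.eq_of_forall_dyadic_eq (apply_dyadic_eq_of_tendsto hφ hσ hψ)⟩

/-- Under (K1)–(K4), if `z ∈ G(t,z)` for all `t ≥ 0`, then `z` is a fixed
point of `R`, i.e. the constant trajectory at `z` belongs to `R`. -/
theorem fixed_point_of_rest_point
    {X : Type*} [MetricSpace X] [CompleteSpace X]
    (R : Set C(ℝ≥0, X))
    (hK1 : ∀ x : X, ∃ φ ∈ R, φ 0 = x)
    (hK2 : ∀ φ ∈ R, ∀ τ : ℝ≥0, ∃ ψ ∈ R, ∀ t : ℝ≥0, ψ t = φ (t + τ))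
    (hK3 : ∀ φ₁ ∈ R, ∀ φ₂ ∈ R, ∀ s : ℝ≥0, 0 < s → φ₂ 0 = φ₁ s →
      ∃ φ ∈ R, (∀ t : ℝ≥0, t ≤ s → φ t = φ₁ t) ∧ (∀ t : ℝ≥0, φ (s + t) = φ₂ t))
    (hK4 : ∀ φ : ℕ → C(ℝ≥0, X), (∀ n, φ n ∈ R) →
      ∀ x₀ : X, Tendsto (fun n => φ n 0) atTop (𝓝 x₀) →
      ∃ σ : ℕ → ℕ, StrictMono σ ∧ ∃ ψ ∈ R,
        ∀ t : ℝ≥0, Tendsto (fun k => φ (σ k) t) atTop (𝓝 (ψ t)))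
    (G : ℝ≥0 → X → Set X)
    (hG : ∀ t x, G t x = {y | ∃ φ ∈ R, φ 0 = x ∧ φ t = y})
    (z : X)
    (hz : ∀ t : ℝ≥0, z ∈ G t z) :
    ∃ φ ∈ R, ∀ t : ℝ≥0, φ t = z :=
  fixed_point_of_rest_point_general R hK3 hK4 G hG z hz
end

section
/- Let X be a complete metric space and R ⊆ C([0,∞); X) satisfy (K1)–(K4). Then a map γ : ℝ → X is a complete trajectory of R (meaning γ(·+h) restricted to [0,∞) belongs to R for every h ∈ ℝ) if and only if γ(t+s) ∈ G(t, γ(s)) for all s ∈ ℝ and t ≥ 0, where G(t,x) = {φ(t) : φ ∈ R, φ(0) = x}. -/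
/-!
Gluing finitely many pieces of `γ` with the concatenation property (K3) gives, for every finite
set of times, an element of `R` that agrees with the shifted trajectory there. Along an increasing
exhaustion of a countable set, (K4) extracts a pointwise limit in `R` which agrees with it on the
whole countable set. Two such limits agreeing on a countable dense set of times coincide by
continuity, which makes the shifted trajectory itself an element of `R`.
-/

open Set Filter Topology
open scoped NNReal

namespace Trajectories

variable {X : Type*} [TopologicalSpace X]

def ConcatClosed (R : Set C(ℝ≥0, X)) : Prop :=
  ∀ φ₁ ∈ R, ∀ φ₂ ∈ R, ∀ s : ℝ≥0, 0 < s → φ₂ 0 = φ₁ s →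
    ∃ φ ∈ R, (∀ t : ℝ≥0, t ≤ s → φ t = φ₁ t) ∧ (∀ t : ℝ≥0, φ (s + t) = φ₂ t)

def PointwiseSeqCompact (R : Set C(ℝ≥0, X)) : Prop :=
  ∀ φ : ℕ → C(ℝ≥0, X), (∀ n, φ n ∈ R) →
    ∀ x₀ : X, Tendsto (fun n => φ n 0) atTop (𝓝 x₀) →
      ∃ σ : ℕ → ℕ, StrictMono σ ∧ ∃ ψ ∈ R,
        ∀ t : ℝ≥0, Tendsto (fun k => φ (σ k) t) atTop (𝓝 (ψ t))

variable {R : Set C(ℝ≥0, X)} {f : ℝ≥0 → X}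

theorem ConcatClosed.exists_mem_eqOn_finset (hR : ConcatClosed R)
    (hf : ∀ s t : ℝ≥0, ∃ φ ∈ R, φ 0 = f s ∧ φ t = f (s + t)) (S : Finset ℝ≥0) :
    ∃ φ ∈ R, EqOn φ f ↑(insert 0 S) := by
  classical
  induction S using Finset.induction_on_max with
  | empty =>
    obtain ⟨φ, hφR, hφ0, -⟩ := hf 0 0
    exact ⟨φ, hφR, by simpa using hφ0⟩
  | insert a S haS ih =>
    obtain ⟨φ₁, hφ₁R, hφ₁⟩ := ih
    set m := (insert 0 S).max' (Finset.insert_nonempty 0 S)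
    have hle_m : ∀ x ∈ insert 0 S, x ≤ m := fun x hx => Finset.le_max' _ x hx
    have hma : m ≤ a := by
      rcases Finset.mem_insert.1 ((insert 0 S).max'_mem (Finset.insert_nonempty 0 S)) with h | h
      · exact h.trans_le zero_le
      · exact (haS m h).le
    rcases eq_zero_or_pos m with hm0 | hmpos
    · -- Here `S ⊆ {0}`, so no gluing is needed.
      obtain ⟨φ, hφR, hφ0, hφa⟩ := hf 0 a
      refine ⟨φ, hφR, ?_⟩
      intro x hx
      rcases (by simpa using hx : x = 0 ∨ x = a ∨ x ∈ S) with rfl | rfl | hxS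
      · exact hφ0
      · simpa using hφa
      · obtain rfl : x = 0 := nonpos_iff_eq_zero.1 (hm0 ▸ hle_m x (by simp [hxS]))
        exact hφ0
    · obtain ⟨φ₂, hφ₂R, hφ₂0, hφ₂⟩ := hf m (a - m)
      have hglue : φ₂ 0 = φ₁ m := by
        rw [hφ₂0, hφ₁ ((insert 0 S).max'_mem (Finset.insert_nonempty 0 S))]
      obtain ⟨φ, hφR, hφ_le, hφ_add⟩ := hR φ₁ hφ₁R φ₂ hφ₂R m hmpos hglue
      refine ⟨φ, hφR, ?_⟩
      intro x hx
      rcases (by simpa using hx : x = 0 ∨ x = a ∨ x ∈ S) with rfl | rfl | hxS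
      · rw [hφ_le 0 zero_le, hφ₁ (by simp)]
      · rw [← add_tsub_cancel_of_le hma, hφ_add, hφ₂]
      · have hx' : x ∈ insert 0 S := Finset.mem_insert_of_mem hxS
        rw [hφ_le x (hle_m x hx'), hφ₁ hx']

variable [T2Space X]

theorem PointwiseSeqCompact.exists_mem_eqOn_of_countable (hR : PointwiseSeqCompact R)
    (hfin : ∀ S : Finset ℝ≥0, ∃ φ ∈ R, EqOn φ f ↑(insert 0 S)) {C : Set ℝ≥0}
    (hC : C.Countable) : ∃ ψ ∈ R, EqOn ψ f C := by
  classical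
  obtain ⟨d, hCd⟩ := countable_iff_exists_subset_range.1 hC
  choose φ hφR hφ using fun n => hfin ((Finset.range n).image d)
  have hφ0 : ∀ n, φ n 0 = f 0 := fun n => hφ n (by simp)
  obtain ⟨σ, hσ, ψ, hψR, hψ⟩ :=
    hR φ hφR (f 0) (tendsto_const_nhds.congr fun n => (hφ0 n).symm)
  refine ⟨ψ, hψR, (?_ : EqOn ψ f (range d)).mono hCd⟩
  rintro _ ⟨k, rfl⟩
  have hev : ∀ᶠ n in atTop, f (d k) = φ (σ n) (d k) := by
    filter_upwards [eventually_gt_atTop k] with n hn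
    refine (hφ (σ n) ?_).symm
    simpa using Or.inr ⟨k, hn.trans_le (hσ.id_le n), rfl⟩
  exact tendsto_nhds_unique (hψ (d k)) (tendsto_const_nhds.congr' hev)

theorem exists_mem_coe_eq (hR₃ : ConcatClosed R) (hR₄ : PointwiseSeqCompact R)
    (hf : ∀ s t : ℝ≥0, ∃ φ ∈ R, φ 0 = f s ∧ φ t = f (s + t)) :
    ∃ φ ∈ R, ⇑φ = f := by
  have hC : ∀ C : Set ℝ≥0, C.Countable → ∃ ψ ∈ R, EqOn ψ f C := fun C =>
    hR₄.exists_mem_eqOn_of_countable (hR₃.exists_mem_eqOn_finset hf)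
  obtain ⟨D, hDc, hDd⟩ := TopologicalSpace.exists_countable_dense ℝ≥0
  obtain ⟨ψ, hψR, hψ⟩ := hC D hDc
  refine ⟨ψ, hψR, funext fun t => ?_⟩
  obtain ⟨ψt, -, hψt⟩ := hC (insert t D) (hDc.insert t)
  have hψψt : ⇑ψ = ψt := Continuous.ext_on hDd ψ.continuous ψt.continuous
    fun x hx => (hψ hx).trans (hψt (mem_insert_of_mem t hx)).symm
  rw [hψψt]
  exact hψt (mem_insert t D)

end Trajectories

open Trajectories

theorem complete_trajectory_iff_general
    {X : Type*} [MetricSpace X]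
    (R : Set C(ℝ≥0, X))
    (hK3 : ∀ φ₁ ∈ R, ∀ φ₂ ∈ R, ∀ s : ℝ≥0, 0 < s → φ₂ 0 = φ₁ s →
      ∃ φ ∈ R, (∀ t : ℝ≥0, t ≤ s → φ t = φ₁ t) ∧ (∀ t : ℝ≥0, φ (s + t) = φ₂ t))
    (hK4 : ∀ φ : ℕ → C(ℝ≥0, X), (∀ n, φ n ∈ R) →
      ∀ x₀ : X, Tendsto (fun n => φ n 0) atTop (𝓝 x₀) →
      ∃ σ : ℕ → ℕ, StrictMono σ ∧ ∃ ψ ∈ R,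
        ∀ t : ℝ≥0, Tendsto (fun k => φ (σ k) t) atTop (𝓝 (ψ t)))
    (G : ℝ≥0 → X → Set X)
    (hG : ∀ t x, G t x = {y | ∃ φ ∈ R, φ 0 = x ∧ φ t = y})
    (γ : ℝ → X) :
    (∀ h : ℝ, ∃ φ ∈ R, ∀ t : ℝ≥0, φ t = γ (↑t + h)) ↔
      (∀ (s : ℝ) (t : ℝ≥0), γ (↑t + s) ∈ G t (γ s)) := by
  simp only [hG, mem_ofPred_eq]
  constructor
  · intro hγ s t
    obtain ⟨φ, hφR, hφ⟩ := hγ s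
    exact ⟨φ, hφR, by simpa using hφ 0, hφ t⟩
  · intro hγ h
    have hf : ∀ s t : ℝ≥0, ∃ φ ∈ R, φ 0 = γ (↑s + h) ∧ φ t = γ (↑(s + t) + h) := by
      intro s t
      simpa only [NNReal.coe_add, add_comm (t : ℝ), add_assoc] using hγ (↑s + h) t
    obtain ⟨φ, hφR, hφ⟩ := exists_mem_coe_eq hK3 hK4 hf
    exact ⟨φ, hφR, congrFun hφ⟩

/-- Under (K1)–(K4), a map `γ : ℝ → X` is a complete trajectory of `R`
(every forward shift `γ(·+h)|_[0,∞)` belongs to `R`) if and only if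
`γ(t+s) ∈ G(t, γ(s))` for all `s ∈ ℝ` and `t ≥ 0`. -/
theorem complete_trajectory_iff
    {X : Type*} [MetricSpace X] [CompleteSpace X]
    (R : Set C(ℝ≥0, X))
    (hK1 : ∀ x : X, ∃ φ ∈ R, φ 0 = x)
    (hK2 : ∀ φ ∈ R, ∀ τ : ℝ≥0, ∃ ψ ∈ R, ∀ t : ℝ≥0, ψ t = φ (t + τ))
    (hK3 : ∀ φ₁ ∈ R, ∀ φ₂ ∈ R, ∀ s : ℝ≥0, 0 < s → φ₂ 0 = φ₁ s →
      ∃ φ ∈ R, (∀ t : ℝ≥0, t ≤ s → φ t = φ₁ t) ∧ (∀ t : ℝ≥0, φ (s + t) = φ₂ t))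
    (hK4 : ∀ φ : ℕ → C(ℝ≥0, X), (∀ n, φ n ∈ R) →
      ∀ x₀ : X, Tendsto (fun n => φ n 0) atTop (𝓝 x₀) →
      ∃ σ : ℕ → ℕ, StrictMono σ ∧ ∃ ψ ∈ R,
        ∀ t : ℝ≥0, Tendsto (fun k => φ (σ k) t) atTop (𝓝 (ψ t)))
    (G : ℝ≥0 → X → Set X)
    (hG : ∀ t x, G t x = {y | ∃ φ ∈ R, φ 0 = x ∧ φ t = y})
    (γ : ℝ → X) :
    (∀ h : ℝ, ∃ φ ∈ R, ∀ t : ℝ≥0, φ t = γ (↑t + h)) ↔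
      (∀ (s : ℝ) (t : ℝ≥0), γ (↑t + s) ∈ G t (γ s)) :=
  complete_trajectory_iff_general R hK3 hK4 G hG γ
end

section
/- Let G be a strict multivalued semiflow on a complete metric space X with a compact global attractor Θ (negatively semi-invariant and attracting all bounded sets). Then Θ is strictly invariant: G(t,Θ) = Θ for all t ≥ 0. -/
/-! Negative semi-invariance `Θ ⊆ G(τ,Θ)` and the semigroup law give `G(t,Θ) ⊆ G(t+τ,Θ)` for
every `τ`, and the right-hand side approaches `Θ` as `τ → ∞`; since `Θ` is closed, `G(t,Θ) ⊆ Θ`. -/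

open Set Bornology
open scoped NNReal

theorem Metric.mem_of_forall_infDist_lt {X : Type*} [MetricSpace X] {s : Set X} {y : X}
    (hs : IsClosed s) (hne : s.Nonempty) (h : ∀ ε > (0 : ℝ), Metric.infDist y s < ε) : y ∈ s :=
  (hs.mem_iff_infDist_zero hne).2 <| le_antisymm
    (le_of_forall_pos_lt_add fun ε hε => by simpa using h ε hε) Metric.infDist_nonneg

theorem biUnion_subset_biUnion_add {X : Type*} (G : ℝ≥0 → X → Set X)
    (hstrict : ∀ t s : ℝ≥0, ∀ x : X, G (t + s) x = ⋃ y ∈ G s x, G t y)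
    {Θ : Set X} {s : ℝ≥0} (hneg : Θ ⊆ ⋃ x ∈ Θ, G s x) (t : ℝ≥0) :
    ⋃ x ∈ Θ, G t x ⊆ ⋃ x ∈ Θ, G (t + s) x := by
  intro y hy
  obtain ⟨x, hx, hyx⟩ := mem_iUnion₂.1 hy
  obtain ⟨x', hx', hxx'⟩ := mem_iUnion₂.1 (hneg hx)
  exact mem_iUnion₂.2 ⟨x', hx', by rw [hstrict]; exact mem_iUnion₂.2 ⟨x, hxx', hyx⟩⟩

theorem attractor_strictly_invariant_general
    {X : Type*} [MetricSpace X]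
    (G : ℝ≥0 → X → Set X)
    (hstrict : ∀ t s : ℝ≥0, ∀ x : X, G (t + s) x = ⋃ y ∈ G s x, G t y)
    (Θ : Set X) (hcomp : IsCompact Θ)
    (hneg : ∀ t : ℝ≥0, Θ ⊆ ⋃ x ∈ Θ, G t x)
    (hattr : ∀ B : Set X, IsBounded B → ∀ ε > (0 : ℝ), ∃ T : ℝ≥0,
      ∀ t ≥ T, ∀ x ∈ B, ∀ y ∈ G t x, Metric.infDist y Θ < ε) :
    ∀ t : ℝ≥0, (⋃ x ∈ Θ, G t x) = Θ := by
  intro t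
  refine Subset.antisymm (fun y hy => ?_) (hneg t)
  obtain ⟨x, hx, -⟩ := mem_iUnion₂.1 hy
  refine Metric.mem_of_forall_infDist_lt hcomp.isClosed ⟨x, hx⟩ fun ε hε => ?_
  obtain ⟨T, hT⟩ := hattr Θ hcomp.isBounded ε hε
  obtain ⟨x', hx', hy'⟩ := mem_iUnion₂.1 (biUnion_subset_biUnion_add G hstrict (hneg T) t hy)
  exact hT (t + T) le_add_self x' hx' y hy'

/-- A compact global attractor of a strict multivalued semiflow is
strictly invariant: `G(t,Θ) = Θ` for all `t ≥ 0`. -/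
theorem attractor_strictly_invariant
    {X : Type*} [MetricSpace X] [CompleteSpace X]
    (G : ℝ≥0 → X → Set X)
    (hG0 : ∀ x : X, G 0 x = {x})
    (hstrict : ∀ t s : ℝ≥0, ∀ x : X, G (t + s) x = ⋃ y ∈ G s x, G t y)
    (Θ : Set X) (hcomp : IsCompact Θ)
    (hneg : ∀ t : ℝ≥0, Θ ⊆ ⋃ x ∈ Θ, G t x)
    (hattr : ∀ B : Set X, IsBounded B → ∀ ε > (0 : ℝ), ∃ T : ℝ≥0,
      ∀ t ≥ T, ∀ x ∈ B, ∀ y ∈ G t x, Metric.infDist y Θ < ε) :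
    ∀ t : ℝ≥0, (⋃ x ∈ Θ, G t x) = Θ :=
  attractor_strictly_invariant_general G hstrict Θ hcomp hneg hattr
end
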